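/- arXiv:math/0008106 — 4 statements merged into one kernel-verified Lean document; each statement's English description precedes it below -/
import Mathlib

section
/- Let U ⊆ ℝ^{2n} be open, let J : U → ℝ^{2n×2n} be a C¹ matrix-valued function satisfying J(x)² = −E_{2n} for all x ∈ U, and let u : U → ℝ be a C² function. Assume that u is almost pluriharmonic, i.e. the 1-form Σ_q (J_q·∇u) dx^q is closed: for all indices s, q one has ∂/∂x^s (Σ_p J_q^p ∂u/∂x^p) = ∂/∂x^q (Σ_p J_s^p ∂u/∂x^p) on U. Then u satisfies the elliptic equation Δ_J u = 0 on U, i.e. Σ_{s,p} A_{sp} ∂²u/∂x^s∂x^p + Σ_p B_p ∂u/∂x^p = 0, where A_{sp} = Σ_q (J_q^s J_q^p + δ_q^s δ_q^p) and B_p = Σ_{s,q} J_q^s (∂J_q^p/∂x^s − ∂J_s^p/∂x^q). -/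
open Matrix

/-- The partial derivative `∂f/∂x^i` of a function `f : ℝ^ι → ℝ` at `x`. -/
noncomputable def pderiv' {ι : Type*} [Fintype ι] [DecidableEq ι]
    (f : (ι → ℝ) → ℝ) (i : ι) (x : ι → ℝ) : ℝ :=
  fderiv ℝ f x (Pi.single i 1)

section aux
variable {n : ℕ} {U : Set (Fin (2 * n) → ℝ)}

lemma diff_pd (hU : IsOpen U) {u : (Fin (2 * n) → ℝ) → ℝ} (hu : ContDiffOn ℝ 2 u U)
    (p : Fin (2 * n)) {x} (hx : x ∈ U) :
    DifferentiableAt ℝ (fun y => pderiv' u p y) x := by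
  have h1 : ContDiffOn ℝ 1 (fderiv ℝ u) U :=
    hu.fderiv_of_isOpen hU (by norm_num)
  have h2 : ContDiffOn ℝ 1 (fun y => fderiv ℝ u y (Pi.single p 1)) U :=
    h1.clm_apply contDiffOn_const
  exact ((h2.differentiableOn one_ne_zero) x hx).differentiableAt (hU.mem_nhds hx)

lemma diff_J (hU : IsOpen U) {J : (Fin (2 * n) → ℝ) → Matrix (Fin (2 * n)) (Fin (2 * n)) ℝ}
    (hJC1 : ∀ q p, ContDiffOn ℝ 1 (fun x => J x q p) U)
    (q p : Fin (2 * n)) {x} (hx : x ∈ U) :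
    DifferentiableAt ℝ (fun y => J y q p) x :=
  (((hJC1 q p).differentiableOn one_ne_zero) x hx).differentiableAt (hU.mem_nhds hx)

lemma expand_pd (hU : IsOpen U) {J : (Fin (2 * n) → ℝ) → Matrix (Fin (2 * n)) (Fin (2 * n)) ℝ}
    (hJC1 : ∀ q p, ContDiffOn ℝ 1 (fun x => J x q p) U)
    {u : (Fin (2 * n) → ℝ) → ℝ} (hu : ContDiffOn ℝ 2 u U)
    (s q : Fin (2 * n)) {x} (hx : x ∈ U) :
    pderiv' (fun y => ∑ p, J y q p * pderiv' u p y) s x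
      = ∑ p, (pderiv' (fun y => J y q p) s x * pderiv' u p x
          + J x q p * pderiv' (fun y => pderiv' u p y) s x) := by
  have h1 : fderiv ℝ (fun y => ∑ p, J y q p * pderiv' u p y) x
      = ∑ p, fderiv ℝ (fun y => J y q p * pderiv' u p y) x :=
    fderiv_fun_sum (fun p _ => (diff_J hU hJC1 q p hx).mul (diff_pd hU hu p hx))
  rw [show pderiv' (fun y => ∑ p, J y q p * pderiv' u p y) s x
      = fderiv ℝ (fun y => ∑ p, J y q p * pderiv' u p y) x (Pi.single s 1) from rfl, h1,
    ContinuousLinearMap.sum_apply]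
  refine Finset.sum_congr rfl fun p _ => ?_
  rw [fderiv_fun_mul (diff_J hU hJC1 q p hx) (diff_pd hU hu p hx)]
  simp only [ContinuousLinearMap.add_apply, ContinuousLinearMap.smul_apply, smul_eq_mul,
    pderiv']
  ring

end aux

/-- Let `U ⊆ ℝ^{2n}` be open, `J : U → ℝ^{2n×2n}` a `C¹` matrix-valued map with
`J(x)² = −E_{2n}` on `U`, and `u : U → ℝ` of class `C²`.  If `u` is almost
pluriharmonic, i.e. the 1-form `Σ_q (J_q·∇u) dx^q` is closed
(`∂_s(Σ_p J_q^p ∂_p u) = ∂_q(Σ_p J_s^p ∂_p u)` on `U` for all `s, q`), then `u`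
satisfies the elliptic equation `Δ_J u = 0` on `U`:
`Σ_{s,p} A_{sp} ∂²u/∂x^s∂x^p + Σ_p B_p ∂u/∂x^p = 0` with
`A_{sp} = Σ_q (J_q^s J_q^p + δ_q^s δ_q^p)` and
`B_p = Σ_{s,q} J_q^s (∂J_q^p/∂x^s − ∂J_s^p/∂x^q)`. -/
theorem stmt1 (n : ℕ) (U : Set (Fin (2 * n) → ℝ)) (hU : IsOpen U)
    (J : (Fin (2 * n) → ℝ) → Matrix (Fin (2 * n)) (Fin (2 * n)) ℝ)
    (hJC1 : ∀ q p, ContDiffOn ℝ 1 (fun x => J x q p) U)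
    (hJ2 : ∀ x ∈ U, J x * J x = -1)
    (u : (Fin (2 * n) → ℝ) → ℝ) (hu : ContDiffOn ℝ 2 u U)
    (hclosed : ∀ s q : Fin (2 * n), ∀ x ∈ U,
      pderiv' (fun y => ∑ p, J y q p * pderiv' u p y) s x =
        pderiv' (fun y => ∑ p, J y s p * pderiv' u p y) q x) :
    ∀ x ∈ U,
      (∑ s, ∑ p,
          (∑ q, (J x q s * J x q p +
            (if q = s then (1 : ℝ) else 0) * (if q = p then (1 : ℝ) else 0))) *
            pderiv' (fun y => pderiv' u p y) s x) +
        (∑ p,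
          (∑ s, ∑ q, J x q s *
            (pderiv' (fun y => J y q p) s x - pderiv' (fun y => J y s p) q x)) *
            pderiv' u p x) = 0 := by
  intro x hx
  set D2 : Fin (2 * n) → Fin (2 * n) → ℝ :=
    fun p s => pderiv' (fun y => pderiv' u p y) s x with hD2
  set Du : Fin (2 * n) → ℝ := fun p => pderiv' u p x with hDu
  set dJ : Fin (2 * n) → Fin (2 * n) → Fin (2 * n) → ℝ :=
    fun q p s => pderiv' (fun y => J y q p) s x with hdJ
  -- entries of J^2 = -1
  have hJJ : ∀ q p, (∑ t, J x q t * J x t p) = if q = p then (-1 : ℝ) else 0 := by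
    intro q p
    have := congrArg (fun M => M q p) (hJ2 x hx)
    simpa [Matrix.mul_apply, Matrix.one_apply, apply_ite] using this
  -- key identity from closedness
  have key :
      (∑ s, ∑ q, J x q s * ∑ p, (dJ q p s * Du p + J x q p * D2 p s))
        = ∑ s, ∑ q, J x q s * ∑ p, (dJ s p q * Du p + J x s p * D2 p q) := by
    refine Finset.sum_congr rfl fun s _ => Finset.sum_congr rfl fun q _ => ?_
    rw [← expand_pd hU hJC1 hu s q hx, ← expand_pd hU hJC1 hu q s hx,
      hclosed s q x hx]
  -- name the two sides
  set L := ∑ s, ∑ q, J x q s * ∑ p, (dJ q p s * Du p + J x q p * D2 p s) with hL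
  set R := ∑ s, ∑ q, J x q s * ∑ p, (dJ s p q * Du p + J x s p * D2 p q) with hR
  -- expand L
  have hLsplit : L = (∑ s, ∑ q, ∑ p, J x q s * (dJ q p s * Du p))
      + ∑ s, ∑ q, ∑ p, J x q s * (J x q p * D2 p s) := by
    rw [hL]
    simp only [Finset.mul_sum, mul_add, Finset.sum_add_distrib]
  -- expand R; second part collapses via hJJ
  have hRsplit : R = (∑ s, ∑ q, ∑ p, J x q s * (dJ s p q * Du p))
      - ∑ p, D2 p p := by
    rw [hR]
    simp only [Finset.mul_sum, mul_add, Finset.sum_add_distrib]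
    congr 1
    have : (∑ s, ∑ q, ∑ p, J x q s * (J x s p * D2 p q))
        = ∑ q, ∑ p, (∑ s, J x q s * J x s p) * D2 p q := by
      rw [Finset.sum_comm]
      refine Finset.sum_congr rfl fun q _ => ?_
      rw [Finset.sum_comm]
      refine Finset.sum_congr rfl fun p _ => ?_
      rw [Finset.sum_mul]
      exact Finset.sum_congr rfl fun s _ => by ring
    rw [this]
    have : (∑ q, ∑ p, (∑ s, J x q s * J x s p) * D2 p q)
        = ∑ q, ∑ p, (if q = p then (-1:ℝ) else 0) * D2 p q := by
      refine Finset.sum_congr rfl fun q _ => Finset.sum_congr rfl fun p _ => ?_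
      rw [hJJ q p]
    rw [this]
    simp [Finset.sum_ite_eq, ite_mul]
  -- rewrite goal pieces
  have hA : (∑ s, ∑ p,
      (∑ q, (J x q s * J x q p +
        (if q = s then (1 : ℝ) else 0) * (if q = p then (1 : ℝ) else 0))) * D2 p s)
      = (∑ s, ∑ q, ∑ p, J x q s * (J x q p * D2 p s)) + ∑ p, D2 p p := by
    have step : ∀ s, (∑ p,
        (∑ q, (J x q s * J x q p +
          (if q = s then (1 : ℝ) else 0) * (if q = p then (1 : ℝ) else 0))) * D2 p s)
        = (∑ q, ∑ p, J x q s * (J x q p * D2 p s)) + D2 s s := by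
      intro s
      have e1 : ∀ p, (∑ q, (J x q s * J x q p +
          (if q = s then (1 : ℝ) else 0) * (if q = p then (1 : ℝ) else 0))) * D2 p s
          = (∑ q, J x q s * (J x q p * D2 p s))
            + (if s = p then (1:ℝ) else 0) * D2 p s := by
        intro p
        rw [Finset.sum_add_distrib, add_mul, Finset.sum_mul]
        congr 1
        · exact Finset.sum_congr rfl fun q _ => by ring
        · congr 1
          simp only [ite_mul, one_mul, zero_mul]
          rw [Finset.sum_ite_eq' Finset.univ s fun q => if q = p then (1:ℝ) else 0]
          simp [eq_comm]
      rw [Finset.sum_congr rfl fun p _ => e1 p, Finset.sum_add_distrib]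
      congr 1
      · exact Finset.sum_comm
      · simp [Finset.sum_ite_eq, ite_mul]
    rw [Finset.sum_congr rfl fun s _ => step s, Finset.sum_add_distrib]
  have hB : (∑ p, (∑ s, ∑ q, J x q s * (dJ q p s - dJ s p q)) * Du p)
      = (∑ s, ∑ q, ∑ p, J x q s * (dJ q p s * Du p))
        - ∑ s, ∑ q, ∑ p, J x q s * (dJ s p q * Du p) := by
    calc (∑ p, (∑ s, ∑ q, J x q s * (dJ q p s - dJ s p q)) * Du p)
        = ∑ p, ∑ s, ∑ q,
            (J x q s * (dJ q p s * Du p) - J x q s * (dJ s p q * Du p)) := by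
          refine Finset.sum_congr rfl fun p _ => ?_
          rw [Finset.sum_mul]
          refine Finset.sum_congr rfl fun s _ => ?_
          rw [Finset.sum_mul]
          exact Finset.sum_congr rfl fun q _ => by ring
      _ = ∑ s, ∑ p, ∑ q,
            (J x q s * (dJ q p s * Du p) - J x q s * (dJ s p q * Du p)) :=
          Finset.sum_comm
      _ = ∑ s, ∑ q, ∑ p,
            (J x q s * (dJ q p s * Du p) - J x q s * (dJ s p q * Du p)) :=
          Finset.sum_congr rfl fun s _ => Finset.sum_comm
      _ = _ := by simp only [Finset.sum_sub_distrib]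
  rw [hA, hB]
  have : L = R := key
  rw [hLsplit, hRsplit] at this
  linarith
end

section
/- Let A, B, C, D be complex n×n matrices with C−Eₙ invertible, satisfying A = −(C−Eₙ)⁻¹·D·(C−Eₙ) and B + Eₙ = −(C−Eₙ)⁻¹·(D² + Eₙ). Then for any vectors v₁, v₂ ∈ ℂⁿ, the full system ((A − i·Eₙ)v₁ + (B + Eₙ)v₂ = 0 and (C − Eₙ)v₁ + (D − i·Eₙ)v₂ = 0) is equivalent to the reduced system (C − Eₙ)v₁ + (D − i·Eₙ)v₂ = 0. In other words, the first n equations of the system (J* − i·E_{2n})df = 0 follow from the last n equations. -/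
open Matrix

lemma aux9 {n : ℕ} (M D E : Matrix (Fin n) (Fin n) ℂ) (h : E * M = 1) :
    (-(M * D * E) - Complex.I • 1) * (M * -(D - Complex.I • 1)) + -(M * (D * D + 1)) = 0 := by
  have h' : ∀ X : Matrix (Fin n) (Fin n) ℂ, E * (M * X) = X := fun X => by
    rw [← mul_assoc, h, one_mul]
  simp only [mul_neg, neg_mul, sub_mul, mul_sub, mul_add, add_mul, smul_mul_assoc,
    mul_smul_comm, one_mul, mul_one, mul_assoc, h', smul_smul, Complex.I_mul_I,
    neg_smul, one_smul, h, smul_add, smul_neg, smul_smul]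
  match_scalars <;> simp [Complex.I_sq]

/-- For complex `n×n` matrices with `C−Eₙ` invertible satisfying
`A = −(C−Eₙ)⁻¹·D·(C−Eₙ)` and `B + Eₙ = −(C−Eₙ)⁻¹·(D² + Eₙ)`, the full system
`(A − i·Eₙ)v₁ + (B + Eₙ)v₂ = 0 ∧ (C − Eₙ)v₁ + (D − i·Eₙ)v₂ = 0` is equivalent to
the reduced system `(C − Eₙ)v₁ + (D − i·Eₙ)v₂ = 0`: the first `n` equations of
`(J* − i·E_{2n})df = 0` follow from the last `n` ones. -/
theorem stmt9 (n : ℕ) (A B C D : Matrix (Fin n) (Fin n) ℂ)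
    (hC : IsUnit (C - 1))
    (hA : A = -((C - 1)⁻¹ * D * (C - 1)))
    (hB : B + 1 = -((C - 1)⁻¹ * (D * D + 1)))
    (v₁ v₂ : Fin n → ℂ) :
    ((A - Complex.I • 1) *ᵥ v₁ + (B + 1) *ᵥ v₂ = 0 ∧
        (C - 1) *ᵥ v₁ + (D - Complex.I • 1) *ᵥ v₂ = 0) ↔
      (C - 1) *ᵥ v₁ + (D - Complex.I • 1) *ᵥ v₂ = 0 := by
  constructor
  · exact fun h => h.2
  · intro h
    refine ⟨?_, h⟩
    have hdet := (Matrix.isUnit_iff_isUnit_det _).mp hC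
    have h1 : (C - 1)⁻¹ * (C - 1) = 1 := Matrix.nonsing_inv_mul _ hdet
    have h2 : (C - 1) * (C - 1)⁻¹ = 1 := Matrix.mul_nonsing_inv _ hdet
    have hv₁ : v₁ = ((C - 1)⁻¹ * -(D - Complex.I • 1)) *ᵥ v₂ := by
      have h' : (C - 1) *ᵥ v₁ = -(D - Complex.I • 1) *ᵥ v₂ := by
        rw [Matrix.neg_mulVec]
        exact eq_neg_of_add_eq_zero_left h
      have := congrArg (fun w => (C - 1)⁻¹ *ᵥ w) h'
      simpa [Matrix.mulVec_mulVec, h1] using this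
    have key : (A - Complex.I • 1) * ((C - 1)⁻¹ * -(D - Complex.I • 1)) + (B + 1) = 0 := by
      rw [hA, hB]
      exact aux9 _ _ _ h2
    rw [hv₁, Matrix.mulVec_mulVec, ← Matrix.add_mulVec, key, Matrix.zero_mulVec]
end

section
/- Let P and Q be real n×n matrices with Q invertible, and define the 2n×2n block matrix J = [[−P·Q⁻¹ , −P·Q⁻¹·P − Q],[Q⁻¹ , Q⁻¹·P]]. Then J² + E_{2n} = 0, i.e. J is a linear complex structure on ℝ^{2n}. -/
open Matrix

/-- For real `n×n` matrices `P`, `Q` with `Q` invertible, the block matrix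
`J = [[−P·Q⁻¹ , −P·Q⁻¹·P − Q],[Q⁻¹ , Q⁻¹·P]]` satisfies `J² + E_{2n} = 0`,
i.e. `J` is a linear complex structure on `ℝ^{2n}`. -/
theorem stmt10 (n : ℕ) (P Q : Matrix (Fin n) (Fin n) ℝ) (hQ : IsUnit Q) :
    fromBlocks (-(P * Q⁻¹)) (-(P * Q⁻¹ * P) - Q) Q⁻¹ (Q⁻¹ * P) *
        fromBlocks (-(P * Q⁻¹)) (-(P * Q⁻¹ * P) - Q) Q⁻¹ (Q⁻¹ * P) + 1 = 0 := by
  have h1 : Q⁻¹ * Q = 1 := nonsing_inv_mul Q (isUnit_iff_isUnit_det Q |>.mp hQ)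
  have h2 : Q * Q⁻¹ = 1 := mul_nonsing_inv Q (isUnit_iff_isUnit_det Q |>.mp hQ)
  rw [fromBlocks_multiply, ← fromBlocks_one, ← fromBlocks_zero, fromBlocks_add]
  have a11 : -(P * Q⁻¹) * -(P * Q⁻¹) + (-(P * Q⁻¹ * P) - Q) * Q⁻¹ + 1 = 0 := by
    have : Q * Q⁻¹ = 1 := h2
    noncomm_ring
    simp only [Matrix.mul_assoc, h2, Matrix.mul_one]
    abel
  have a12 : -(P * Q⁻¹) * (-(P * Q⁻¹ * P) - Q) + (-(P * Q⁻¹ * P) - Q) * (Q⁻¹ * P) + 0 = 0 := by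
    noncomm_ring
    simp only [Matrix.mul_assoc, h1, Matrix.mul_one]
    simp only [← Matrix.mul_assoc, h2, Matrix.one_mul]
    abel
  have a21 : Q⁻¹ * -(P * Q⁻¹) + Q⁻¹ * P * Q⁻¹ + 0 = 0 := by
    noncomm_ring
  have a22 : Q⁻¹ * (-(P * Q⁻¹ * P) - Q) + Q⁻¹ * P * (Q⁻¹ * P) + 1 = 0 := by
    noncomm_ring
    simp only [Matrix.mul_assoc, h1, Matrix.mul_one, Matrix.one_mul]
    abel
  rw [a11, a12, a21, a22, fromBlocks_zero]
end

section
/- The reconstruction rule (*) defines a bijection between the set of pairs (P, Q) of real n×n matrices with Q invertible and the set of real 2n×2n matrices J satisfying J² = −E_{2n} whose lower-left n×n block is invertible. Explicitly: for every such J there is a unique pair (P, Q) with Q invertible such that J = [[−P·Q⁻¹ , −P·Q⁻¹·P − Q],[Q⁻¹ , Q⁻¹·P]], and conversely every pair (P, Q) with Q invertible determines such a J by this rule. -/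
open Matrix

/-- The reconstruction rule (*) sending `(P, Q)` (with `Q` invertible) to the block
matrix `[[−P·Q⁻¹ , −P·Q⁻¹·P − Q],[Q⁻¹ , Q⁻¹·P]]`. -/
noncomputable def spencerRule (n : ℕ) (P Q : Matrix (Fin n) (Fin n) ℝ) :
    Matrix (Fin n ⊕ Fin n) (Fin n ⊕ Fin n) ℝ :=
  fromBlocks (-(P * Q⁻¹)) (-(P * Q⁻¹ * P) - Q) Q⁻¹ (Q⁻¹ * P)

/-- The rule (*) is a bijection between pairs `(P, Q)` of real `n×n` matrices with `Q`
invertible and real `2n×2n` matrices `J` with `J² = −E_{2n}` whose lower-left `n×n`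
block is invertible: every pair with `Q` invertible yields such a `J`, and every such
`J` comes from a unique pair. -/
theorem stmt11 (n : ℕ) :
    (∀ P Q : Matrix (Fin n) (Fin n) ℝ, IsUnit Q →
        spencerRule n P Q * spencerRule n P Q = -1 ∧
        IsUnit (spencerRule n P Q).toBlocks₂₁) ∧
    (∀ J : Matrix (Fin n ⊕ Fin n) (Fin n ⊕ Fin n) ℝ,
        J * J = -1 → IsUnit J.toBlocks₂₁ →
        ∃! PQ : Matrix (Fin n) (Fin n) ℝ × Matrix (Fin n) (Fin n) ℝ,
          IsUnit PQ.2 ∧ J = spencerRule n PQ.1 PQ.2) := by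
  have hneg : (-1 : Matrix (Fin n ⊕ Fin n) (Fin n ⊕ Fin n) ℝ) =
      fromBlocks (-1) 0 0 (-1) := by
    rw [← fromBlocks_one, fromBlocks_neg]; simp
  constructor
  · intro P Q hQ
    haveI := hQ.invertible
    constructor
    · rw [spencerRule, fromBlocks_multiply, hneg, fromBlocks_inj]
      refine ⟨?_, ?_, ?_, ?_⟩ <;>
        simp [Matrix.mul_assoc, Matrix.mul_inv_cancel_left_of_invertible,
          Matrix.inv_mul_cancel_left_of_invertible, Matrix.mul_inv_of_invertible,
          Matrix.inv_mul_of_invertible, sub_mul, mul_sub] <;> abel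
    · rw [spencerRule, toBlocks_fromBlocks₂₁]
      exact isUnit_nonsing_inv_iff.mpr hQ
  · intro J hJ2 hC
    set A := J.toBlocks₁₁ with hA
    set B := J.toBlocks₁₂ with hB
    set C := J.toBlocks₂₁ with hCdef
    set D := J.toBlocks₂₂ with hD
    haveI := hC.invertible
    have hJ : J = fromBlocks A B C D := (fromBlocks_toBlocks J).symm
    rw [hJ, fromBlocks_multiply, hneg, fromBlocks_inj] at hJ2
    obtain ⟨h11, h12, h21, h22⟩ := hJ2
    have hCinv : IsUnit (C⁻¹) := isUnit_nonsing_inv_iff.mpr hC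
    have hCC : C⁻¹⁻¹ = C := inv_inv_of_invertible C
    refine ⟨(C⁻¹ * D, C⁻¹), ⟨hCinv, ?_⟩, ?_⟩
    · rw [hJ, spencerRule, fromBlocks_inj]
      have hAeq : A = -(C⁻¹ * D * C) := by
        have : C * A = -(D * C) := by
          linear_combination (norm := noncomm_ring) h21
        calc A = C⁻¹ * (C * A) := by rw [Matrix.inv_mul_cancel_left_of_invertible]
          _ = -(C⁻¹ * D * C) := by rw [this]; noncomm_ring
      have hBeq : B = -(C⁻¹ * (D * D)) - C⁻¹ := by
        have : C * B = -1 - D * D := by linear_combination (norm := noncomm_ring) h22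
        calc B = C⁻¹ * (C * B) := by rw [Matrix.inv_mul_cancel_left_of_invertible]
          _ = -(C⁻¹ * (D * D)) - C⁻¹ := by rw [this]; noncomm_ring
      refine ⟨?_, ?_, ?_, ?_⟩
      · rw [hCC, hAeq]
      · rw [hCC, hBeq]
        simp [Matrix.mul_assoc, Matrix.mul_inv_cancel_left_of_invertible]
      · rw [hCC]
      · rw [hCC, Matrix.mul_inv_cancel_left_of_invertible]
    · rintro ⟨P', Q'⟩ ⟨hQ', hJeq⟩
      haveI := hQ'.invertible
      have h1 : C = Q'⁻¹ := by
        rw [hCdef, hJeq, spencerRule, toBlocks_fromBlocks₂₁]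
      have h2 : D = Q'⁻¹ * P' := by
        rw [hD, hJeq, spencerRule, toBlocks_fromBlocks₂₂]
      have hQeq : Q' = C⁻¹ := by rw [h1, inv_inv_of_invertible]
      have hPeq : P' = C⁻¹ * D := by
        rw [h2, hQeq, hCC, Matrix.inv_mul_cancel_left_of_invertible]
      simp [Prod.ext_iff, hQeq, hPeq]
end
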